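/- arXiv:2411.13171 — 2 statements merged into one kernel-verified Lean document; each statement's English description precedes it below -/
import Mathlib

section
/- Let P be a finite set of points in ℝ², let 0 ≤ α ≤ 1, and let k ∈ ℕ. Suppose there exist S ⊆ P with |S| ≤ k and r : P → ℝ with r(p) = 1 for all p ∉ S and α ≤ r(p) ≤ 1 for all p ∈ S, such that the open-disk intersection graph G(P,r) is acyclic. Then every p ∈ P satisfies |{q ∈ P : q ≠ p and dist(p,q) < 2}| ≤ 25k + 50, i.e., the maximum degree of the unit disk graph G(P,𝟏) is at most 25k + 50. -/
open scoped Classical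

abbrev Pt := EuclideanSpace ℝ (Fin 2)

/-- The open-disk intersection graph of the points of `P` with radius assignment `r`:
distinct points `p, q ∈ P` are adjacent iff `dist p q < r p + r q`. -/
def diskGraph (P : Finset Pt) (r : Pt → ℝ) : SimpleGraph {x : Pt // x ∈ P} where
  Adj p q := p ≠ q ∧ dist (p : Pt) (q : Pt) < r p + r q
  symm := ⟨fun p q h => ⟨h.1.symm, by rw [dist_comm, add_comm]; exact h.2⟩⟩
  loopless := ⟨fun p h => h.1 rfl⟩

/-!
Cover the open disk of radius 2 around `p` by the 25 unit grid squares meeting it. Two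
unit-radius points in a common grid square are at distance `< √2 < 2`, so their disks
intersect; hence three unshrunk points in one square would form a triangle in the acyclic
graph `G(P, r)`. So each square holds at most two points outside `S`, and the neighbourhood
of `p` has at most `25 · 2` points outside `S` plus at most `k` points of `S`.
-/

open Finset

noncomputable def gridCell (x : Pt) : ℤ × ℤ := (⌊x 0⌋, ⌊x 1⌋)

lemma dist_lt_two_of_gridCell_eq {x y : Pt} (h : gridCell x = gridCell y) : dist x y < 2 := by
  have h0 : (x 0 - y 0) ^ 2 < 1 := (sq_lt_one_iff_abs_lt_one _).mpr
    (Int.abs_sub_lt_one_of_floor_eq_floor (congrArg Prod.fst h))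
  have h1 : (x 1 - y 1) ^ 2 < 1 := (sq_lt_one_iff_abs_lt_one _).mpr
    (Int.abs_sub_lt_one_of_floor_eq_floor (congrArg Prod.snd h))
  rw [EuclideanSpace.dist_eq, Fin.sum_univ_two, Real.sqrt_lt' two_pos, Real.dist_eq,
    Real.dist_eq, sq_abs, sq_abs]
  linarith

lemma floor_mem_Icc_of_dist_lt_two {a b : ℝ} (h : dist a b < 2) :
    ⌊b⌋ ∈ Icc (⌊a⌋ - 2) (⌊a⌋ + 2) := by
  rw [Real.dist_eq, abs_sub_lt_iff] at h
  rw [mem_Icc, ← Int.floor_sub_ofNat, ← Int.floor_add_ofNat]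
  exact ⟨Int.floor_le_floor (by linarith), Int.floor_le_floor (by linarith)⟩

lemma gridCell_mem_of_dist_lt_two {p q : Pt} (h : dist p q < 2) :
    gridCell q ∈ Icc (⌊p 0⌋ - 2) (⌊p 0⌋ + 2) ×ˢ Icc (⌊p 1⌋ - 2) (⌊p 1⌋ + 2) :=
  mem_product.mpr
    ⟨floor_mem_Icc_of_dist_lt_two ((PiLp.dist_apply_le p q 0).trans_lt h),
      floor_mem_Icc_of_dist_lt_two ((PiLp.dist_apply_le p q 1).trans_lt h)⟩

lemma card_le_two_of_isAcyclic_diskGraph {P T : Finset Pt} {r : Pt → ℝ}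
    (hacyc : (diskGraph P r).IsAcyclic) (hTP : T ⊆ P)
    (hT : ∀ x ∈ T, ∀ y ∈ T, dist x y < r x + r y) : T.card ≤ 2 := by
  by_contra! hcard
  obtain ⟨a, ha, b, hb, c, hc, hab, hac, hbc⟩ := two_lt_card.mp hcard
  have adj : ∀ x (hx : x ∈ T) y (hy : y ∈ T), x ≠ y →
      (diskGraph P r).Adj ⟨x, hTP hx⟩ ⟨y, hTP hy⟩ := fun x hx y hy hxy =>
    ⟨fun h => hxy (congrArg Subtype.val h), hT x hx y hy⟩
  exact hacyc.cliqueFree le_rfl _ (SimpleGraph.is3Clique_triple_iff.mpr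
    ⟨adj a ha b hb hab, adj a ha c hc hac, adj b hb c hc hbc⟩)

lemma card_filter_gridCell_le_two {P S : Finset Pt} {r : Pt → ℝ}
    (hacyc : (diskGraph P r).IsAcyclic) (hr1 : ∀ p ∈ P, p ∉ S → r p = 1) (c : ℤ × ℤ) :
    ((P \ S).filter (gridCell · = c)).card ≤ 2 := by
  refine card_le_two_of_isAcyclic_diskGraph hacyc
    ((filter_subset _ _).trans sdiff_subset) fun x hx y hy => ?_
  simp only [mem_filter, mem_sdiff] at hx hy
  rw [hr1 x hx.1.1 hx.1.2, hr1 y hy.1.1 hy.1.2]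
  linarith [dist_lt_two_of_gridCell_eq (hx.2.trans hy.2.symm)]

lemma card_sdiff_filter_dist_lt_two_le {P S : Finset Pt} {r : Pt → ℝ}
    (hacyc : (diskGraph P r).IsAcyclic) (hr1 : ∀ p ∈ P, p ∉ S → r p = 1) (p : Pt) :
    (P.filter (dist p · < 2) \ S).card ≤ 50 := by
  set N := P.filter (dist p · < 2) \ S
  have hcells : (N.image gridCell).card ≤ 25 := by
    calc (N.image gridCell).card
        ≤ (Icc (⌊p 0⌋ - 2) (⌊p 0⌋ + 2) ×ˢ Icc (⌊p 1⌋ - 2) (⌊p 1⌋ + 2)).card := by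
          refine card_le_card fun c hc => ?_
          obtain ⟨q, hq, rfl⟩ := mem_image.mp hc
          exact gridCell_mem_of_dist_lt_two (mem_filter.mp (mem_sdiff.mp hq).1).2
      _ = 25 := by rw [card_product, Int.card_Icc, Int.card_Icc]; ring_nf; rfl
  have hfibers : ∀ c ∈ N.image gridCell, (N.filter (gridCell · = c)).card ≤ 2 := fun c _ =>
    (card_le_card (filter_subset_filter _ (sdiff_subset_sdiff (filter_subset _ _) le_rfl))).trans
      (card_filter_gridCell_le_two hacyc hr1 c)
  linarith [card_le_mul_card_image N 2 hfibers]

theorem stmt_7_general (P : Finset Pt) (k : ℕ)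
    (S : Finset Pt) (hcard : S.card ≤ k)
    (r : Pt → ℝ) (hr1 : ∀ p ∈ P, p ∉ S → r p = 1)
    (hacyc : (diskGraph P r).IsAcyclic) :
    ∀ p ∈ P, ({q : Pt | q ∈ P ∧ q ≠ p ∧ dist p q < 2}).ncard ≤ 25 * k + 50 := by
  intro p _
  set N := P.filter (dist p · < 2)
  have hsub : {q : Pt | q ∈ P ∧ q ≠ p ∧ dist p q < 2} ⊆ ↑N := fun q hq =>
    mem_filter.mpr ⟨hq.1, hq.2.2⟩
  calc ({q : Pt | q ∈ P ∧ q ≠ p ∧ dist p q < 2}).ncard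
      ≤ N.card := (Set.ncard_le_ncard hsub N.finite_toSet).trans (Set.ncard_coe_finset N).le
    _ = (N ∩ S).card + (N \ S).card := (card_inter_add_card_sdiff N S).symm
    _ ≤ k + 50 := add_le_add ((card_le_card inter_subset_right).trans hcard)
        (card_sdiff_filter_dist_lt_two_le hacyc hr1 p)
    _ ≤ 25 * k + 50 := by omega

/-- If (P,α,k) is a yes-instance of (Min) k-Shrinking to Acyclicity, then the maximum
degree of the unit disk graph G(P,𝟏) is at most 25k + 50. -/
theorem stmt_7 (P : Finset Pt) (α : ℝ) (hα₀ : 0 ≤ α) (hα₁ : α ≤ 1) (k : ℕ)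
    (S : Finset Pt) (hS : S ⊆ P) (hcard : S.card ≤ k)
    (r : Pt → ℝ) (hr1 : ∀ p ∈ P, p ∉ S → r p = 1) (hr2 : ∀ p ∈ S, α ≤ r p ∧ r p ≤ 1)
    (hacyc : (diskGraph P r).IsAcyclic) :
    ∀ p ∈ P, ({q : Pt | q ∈ P ∧ q ≠ p ∧ dist p q < 2}).ncard ≤ 25 * k + 50 :=
  stmt_7_general P k S hcard r hr1 hacyc
end

section
/- Let P be a finite set of points in ℝ², let 0 ≤ α ≤ 1, k ∈ ℕ and μ ≥ 0. Let U ⊆ P be a vertex cover of the unit disk graph G(P,𝟏) (every pair of distinct p,q ∈ P with dist(p,q) < 2 has p ∈ U or q ∈ U), and let T = U ∪ {p ∈ P : there exists q ∈ U with dist(p,q) < 2}. Then the following are equivalent: (i) there exist S ⊆ P with |S| ≤ k and r : P → ℝ with r(p) = 1 for p ∉ S and α ≤ r(p) ≤ 1 for p ∈ S, such that the open-disk intersection graph G(P,r) is edgeless and Σ_{p∈S}(1 − r(p)) ≤ μ; (ii) there exist S' ⊆ T and r' : T → ℝ with the analogous properties for T in place of P. -/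
open scoped Classical

/-!
Shrinking a disk only removes edges, so a radius assignment making `G(P,r)` edgeless stays
a solution on any `T ⊆ P` after discarding the shrunk points outside `T`. Conversely, a
solution on `T` extends to `P` by giving every point outside `T` radius `1`: since all radii
are at most `1`, an edge of `G(P,r)` joins two points at distance `< 2`, and because `U` is a
vertex cover of `G(P,𝟏)`, both endpoints of such a pair lie in `T`, where `r` is edgeless.
-/

namespace diskGraph

variable {P Q : Finset Pt} {r r' : Pt → ℝ}

theorem adj_iff {a b : {x : Pt // x ∈ P}} :
    (diskGraph P r).Adj a b ↔ (a : Pt) ≠ b ∧ dist (a : Pt) b < r a + r b :=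
  and_congr_left' Subtype.coe_ne_coe.symm

theorem congr_radius (h : ∀ p ∈ P, r p = r' p) : diskGraph P r = diskGraph P r' := by
  ext a b
  simp only [adj_iff, h a a.2, h b b.2]

theorem not_adj_of_subset (hQP : Q ⊆ P) (h : ∀ a b, ¬ (diskGraph P r).Adj a b)
    (a b : {x : Pt // x ∈ Q}) : ¬ (diskGraph Q r).Adj a b := by
  rw [adj_iff]
  exact fun hab => h ⟨a, hQP a.2⟩ ⟨b, hQP b.2⟩ (adj_iff.2 hab)

theorem not_adj_of_close_pairs_subset (hr : ∀ p ∈ P, r p ≤ 1)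
    (hclose : ∀ p ∈ P, ∀ q ∈ P, p ≠ q → dist p q < 2 → p ∈ Q ∧ q ∈ Q)
    (h : ∀ a b, ¬ (diskGraph Q r).Adj a b) (a b : {x : Pt // x ∈ P}) :
    ¬ (diskGraph P r).Adj a b := by
  rw [adj_iff]
  rintro ⟨hne, hlt⟩
  have hdist : dist (a : Pt) b < 2 := hlt.trans_le (by linarith [hr a a.2, hr b b.2])
  obtain ⟨haQ, hbQ⟩ := hclose a a.2 b b.2 hne hdist
  exact h ⟨a, haQ⟩ ⟨b, hbQ⟩ (adj_iff.2 ⟨hne, hlt⟩)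

end diskGraph

def IsShrinkingSolution (P : Finset Pt) (α : ℝ) (k : ℕ) (μ : ℝ) (S : Finset Pt)
    (r : Pt → ℝ) : Prop :=
  S ⊆ P ∧ S.card ≤ k ∧ (∀ p ∈ P, p ∉ S → r p = 1) ∧ (∀ p ∈ S, α ≤ r p ∧ r p ≤ 1) ∧
    (∀ a b, ¬ (diskGraph P r).Adj a b) ∧ ∑ p ∈ S, (1 - r p) ≤ μ

theorem exists_isShrinkingSolution_iff {P : Finset Pt} {α : ℝ} {k : ℕ} {μ : ℝ} :
    (∃ S, ∃ r, IsShrinkingSolution P α k μ S r) ↔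
      ∃ S ⊆ P, S.card ≤ k ∧ ∃ r : Pt → ℝ,
        (∀ p ∈ P, p ∉ S → r p = 1) ∧ (∀ p ∈ S, α ≤ r p ∧ r p ≤ 1) ∧
        (∀ a b, ¬ (diskGraph P r).Adj a b) ∧ ∑ p ∈ S, (1 - r p) ≤ μ := by
  simp only [IsShrinkingSolution, exists_and_left]

namespace IsShrinkingSolution

variable {P T S : Finset Pt} {α μ : ℝ} {k : ℕ} {r : Pt → ℝ}

theorem inter (hTP : T ⊆ P) (h : IsShrinkingSolution P α k μ S r) :
    IsShrinkingSolution T α k μ (S ∩ T) r := by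
  obtain ⟨-, hcard, hone, hbounds, hedgeless, hcost⟩ := h
  refine ⟨Finset.inter_subset_right, (Finset.card_le_card Finset.inter_subset_left).trans hcard,
    fun p hpT hpS => hone p (hTP hpT) fun hpS' => hpS (Finset.mem_inter.2 ⟨hpS', hpT⟩),
    fun p hp => hbounds p (Finset.mem_inter.1 hp).1,
    diskGraph.not_adj_of_subset hTP hedgeless, ?_⟩
  refine (Finset.sum_le_sum_of_subset_of_nonneg Finset.inter_subset_left ?_).trans hcost
  exact fun p hp _ => sub_nonneg.2 (hbounds p hp).2

theorem piecewise (hTP : T ⊆ P)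
    (hclose : ∀ p ∈ P, ∀ q ∈ P, p ≠ q → dist p q < 2 → p ∈ T ∧ q ∈ T)
    (h : IsShrinkingSolution T α k μ S r) :
    IsShrinkingSolution P α k μ S (T.piecewise r 1) := by
  obtain ⟨hST, hcard, hone, hbounds, hedgeless, hcost⟩ := h
  have hagree : ∀ p ∈ T, T.piecewise r 1 p = r p := fun p hp =>
    Finset.piecewise_eq_of_mem _ _ _ hp
  have hone' : ∀ p ∈ P, p ∉ S → T.piecewise r 1 p = 1 := by
    intro p _ hpS
    by_cases hpT : p ∈ T
    · rw [hagree p hpT, hone p hpT hpS]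
    · exact Finset.piecewise_eq_of_notMem _ _ _ hpT
  have hle : ∀ p ∈ P, T.piecewise r 1 p ≤ 1 := by
    intro p hp
    by_cases hpS : p ∈ S
    · rw [hagree p (hST hpS)]
      exact (hbounds p hpS).2
    · exact (hone' p hp hpS).le
  refine ⟨hST.trans hTP, hcard, hone', fun p hp => hagree p (hST hp) ▸ hbounds p hp,
    diskGraph.not_adj_of_close_pairs_subset hle hclose ?_, ?_⟩
  · rwa [diskGraph.congr_radius hagree]
  · rwa [Finset.sum_congr rfl fun p hp => by rw [hagree p (hST hp)]]

end IsShrinkingSolution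

theorem mem_closedNbhd_of_isVertexCover {P U T : Finset Pt}
    (hcover : ∀ p ∈ P, ∀ q ∈ P, p ≠ q → dist p q < 2 → p ∈ U ∨ q ∈ U)
    (hT : ∀ p, p ∈ T ↔ p ∈ U ∨ (p ∈ P ∧ ∃ q ∈ U, dist p q < 2)) :
    ∀ p ∈ P, ∀ q ∈ P, p ≠ q → dist p q < 2 → p ∈ T ∧ q ∈ T := by
  intro p hp q hq hne hpq
  rcases hcover p hp q hq hne hpq with hpU | hqU
  · exact ⟨(hT p).2 (Or.inl hpU), (hT q).2 (Or.inr ⟨hq, p, hpU, dist_comm p q ▸ hpq⟩)⟩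
  · exact ⟨(hT p).2 (Or.inr ⟨hp, q, hqU, hpq⟩), (hT q).2 (Or.inl hqU)⟩

theorem stmt_14_general (P : Finset Pt) (α : ℝ) (k : ℕ)
    (μ : ℝ)
    (U T : Finset Pt) (hUP : U ⊆ P)
    (hcover : ∀ p ∈ P, ∀ q ∈ P, p ≠ q → dist p q < 2 → p ∈ U ∨ q ∈ U)
    (hT : ∀ p, p ∈ T ↔ p ∈ U ∨ (p ∈ P ∧ ∃ q ∈ U, dist p q < 2)) :
    (∃ S ⊆ P, S.card ≤ k ∧ ∃ r : Pt → ℝ,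
        (∀ p ∈ P, p ∉ S → r p = 1) ∧ (∀ p ∈ S, α ≤ r p ∧ r p ≤ 1) ∧
        (∀ a b, ¬ (diskGraph P r).Adj a b) ∧ ∑ p ∈ S, (1 - r p) ≤ μ) ↔
    (∃ S' ⊆ T, S'.card ≤ k ∧ ∃ r' : Pt → ℝ,
        (∀ p ∈ T, p ∉ S' → r' p = 1) ∧ (∀ p ∈ S', α ≤ r' p ∧ r' p ≤ 1) ∧
        (∀ a b, ¬ (diskGraph T r').Adj a b) ∧ ∑ p ∈ S', (1 - r' p) ≤ μ) := by
  have hTP : T ⊆ P := fun p hp => ((hT p).1 hp).elim (fun hpU => hUP hpU) And.left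
  have hclose := mem_closedNbhd_of_isVertexCover hcover hT
  rw [← exists_isShrinkingSolution_iff, ← exists_isShrinkingSolution_iff]
  constructor
  · rintro ⟨S, r, h⟩
    exact ⟨S ∩ T, r, h.inter hTP⟩
  · rintro ⟨S, r, h⟩
    exact ⟨S, T.piecewise r 1, h.piecewise hTP hclose⟩

/-- Instance equivalence of the partial kernel for Min k-Shrinking to Independence:
(P,α,k,μ) admits a solution iff the reduced instance (T,α,k,μ) does, where T is the
union of the closed neighborhoods of a vertex cover U of G(P,𝟏). -/
theorem stmt_14 (P : Finset Pt) (α : ℝ) (hα₀ : 0 ≤ α) (hα₁ : α ≤ 1) (k : ℕ)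
    (μ : ℝ) (hμ : 0 ≤ μ)
    (U T : Finset Pt) (hUP : U ⊆ P)
    (hcover : ∀ p ∈ P, ∀ q ∈ P, p ≠ q → dist p q < 2 → p ∈ U ∨ q ∈ U)
    (hT : ∀ p, p ∈ T ↔ p ∈ U ∨ (p ∈ P ∧ ∃ q ∈ U, dist p q < 2)) :
    (∃ S ⊆ P, S.card ≤ k ∧ ∃ r : Pt → ℝ,
        (∀ p ∈ P, p ∉ S → r p = 1) ∧ (∀ p ∈ S, α ≤ r p ∧ r p ≤ 1) ∧
        (∀ a b, ¬ (diskGraph P r).Adj a b) ∧ ∑ p ∈ S, (1 - r p) ≤ μ) ↔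
    (∃ S' ⊆ T, S'.card ≤ k ∧ ∃ r' : Pt → ℝ,
        (∀ p ∈ T, p ∉ S' → r' p = 1) ∧ (∀ p ∈ S', α ≤ r' p ∧ r' p ≤ 1) ∧
        (∀ a b, ¬ (diskGraph T r').Adj a b) ∧ ∑ p ∈ S', (1 - r' p) ≤ μ) :=
  stmt_14_general P α k μ U T hUP hcover hT
end
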